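/- Exponentiable semifunctors (Proposition 3.9, (1)⟺(4)): Let B be a small semicategory and π : E → B a semifunctor between small semicategories. Then π, regarded as an object of the slice category Semicat/B (which has finite products, given by pullbacks over B computed componentwise), is exponentiable — i.e. the binary product functor (−) × π on Semicat/B admits a right adjoint — if and only if binary factorizations lift uniquely along π: for every morphism f of E and every factorization π f = g₁ ≫ g₂ in B there is exactly one factorization f = f₁ ≫ f₂ in E with π f₁ = g₁ and π f₂ = g₂. -/

import Mathlib

/-!
STATEMENT 11 (Proposition 3.9, (1)⟺(4)): a semifunctor `π : E → B` is exponentiable in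
`Semicat/B` (the product functor `(−) × π`, given by componentwise pullback over `B`,
admits a right adjoint) iff binary factorizations lift uniquely along `π`.
-/

universe v u

open CategoryTheory

/-- A *semicategory*: like a category, but without identity morphisms. -/
class Semicategory (obj : Type u) extends Quiver.{v} obj : Type max u (v + 1) where
  /-- composition of morphisms -/
  comp : ∀ {X Y Z : obj}, (X ⟶ Y) → (Y ⟶ Z) → (X ⟶ Z)
  /-- composition is associative -/
  assoc : ∀ {W X Y Z : obj} (f : W ⟶ X) (g : X ⟶ Y) (h : Y ⟶ Z),
    comp (comp f g) h = comp f (comp g h)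

/-- A *semifunctor* between semicategories. -/
structure Semifunctor (C : Type u) (D : Type u)
    [Semicategory.{v} C] [Semicategory.{v} D] where
  obj : C → D
  map : ∀ {X Y : C}, (X ⟶ Y) → (obj X ⟶ obj Y)
  map_comp : ∀ {X Y Z : C} (f : X ⟶ Y) (g : Y ⟶ Z),
    map (Semicategory.comp f g) = Semicategory.comp (map f) (map g)

theorem Semifunctor.map_heq {C D : Type u} [Semicategory.{v} C] [Semicategory.{v} D]
    {F G : Semifunctor C D} (h : F = G) {X Y : C} (f : X ⟶ Y) :
    HEq (F.map f) (G.map f) := by subst h; rfl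

theorem Semicategory.heq_comp {B : Type u} [Semicategory.{v} B] {a a' b b' c c' : B}
    (ha : a = a') (hb : b = b') (hc : c = c')
    {f : a ⟶ b} {g : b ⟶ c} {f' : a' ⟶ b'} {g' : b' ⟶ c'}
    (hf : HEq f f') (hg : HEq g g') :
    HEq (Semicategory.comp f g) (Semicategory.comp f' g') := by
  subst ha; subst hb; subst hc
  rw [eq_of_heq hf, eq_of_heq hg]

/-- The category `Semicat` of small semicategories and semifunctors. -/
structure SemicatObj : Type (u + 1) where
  α : Type u
  str : Semicategory.{u} α

attribute [instance] SemicatObj.str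

instance : Category.{u} SemicatObj.{u} where
  Hom A B := Semifunctor A.α B.α
  id A := ⟨fun x => x, fun f => f, fun _ _ => rfl⟩
  comp F G := ⟨fun x => G.obj (F.obj x), fun f => G.map (F.map f), fun f g => by
    rw [F.map_comp, G.map_comp]⟩
  id_comp F := rfl
  comp_id F := rfl
  assoc F G H := rfl

section Pullback

variable {Ee Bb : SemicatObj.{u}} (π : Ee ⟶ Bb)

/-- The componentwise pullback of `X : Semicat/B` and `π : E ⟶ B`: the semicategory of
pairs whose images in `B` agree. -/
def PbObj (X : Over Bb) : Type u :=
  {p : X.left.α × Ee.α // X.hom.obj p.1 = π.obj p.2}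

instance pbSemicategory (X : Over Bb) : Semicategory.{u} (PbObj π X) where
  Hom p q := {k : (p.val.1 ⟶ q.val.1) × (p.val.2 ⟶ q.val.2) //
    HEq (X.hom.map k.1) (π.map k.2)}
  comp {p q r} k l :=
    ⟨(Semicategory.comp k.val.1 l.val.1, Semicategory.comp k.val.2 l.val.2), by
      rw [X.hom.map_comp, π.map_comp]
      exact Semicategory.heq_comp p.prop q.prop r.prop k.prop l.prop⟩
  assoc k l m := Subtype.ext (by
    dsimp only
    rw [Semicategory.assoc, Semicategory.assoc])

/-- The pullback, as an object of `Semicat`. -/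
def pb (X : Over Bb) : SemicatObj.{u} := ⟨PbObj π X, inferInstance⟩

/-- The structure map of the pullback to `B`. -/
def pbHom (X : Over Bb) : pb π X ⟶ Bb where
  obj p := π.obj p.val.2
  map k := π.map k.val.2
  map_comp k l := π.map_comp k.val.2 l.val.2

/-- The semifunctor between pullbacks induced by a morphism of `Semicat/B`. -/
def pbMap {X Y : Over Bb} (t : X ⟶ Y) : pb π X ⟶ pb π Y where
  obj p := ⟨(t.left.obj p.val.1, p.val.2), by
    have h1 : Y.hom.obj (t.left.obj p.val.1) = X.hom.obj p.val.1 :=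
      congrArg (fun F : Semifunctor X.left.α Bb.α => F.obj p.val.1) (Over.w t)
    rw [h1, p.prop]⟩
  map {p q} k := ⟨(t.left.map k.val.1, k.val.2),
    HEq.trans (Semifunctor.map_heq (Over.w t) k.val.1) k.prop⟩
  map_comp k l := Subtype.ext (by
    show (t.left.map (Semicategory.comp k.val.1 l.val.1),
        Semicategory.comp k.val.2 l.val.2) =
      (Semicategory.comp (t.left.map k.val.1) (t.left.map l.val.1),
        Semicategory.comp k.val.2 l.val.2)
    rw [t.left.map_comp])

/-- The product functor `(−) × π` on `Semicat/B`, given by componentwise pullback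
over `B`. -/
def sliceProd : Over Bb ⥤ Over Bb where
  obj X := Over.mk (pbHom π X)
  map {X Y} t := Over.homMk (pbMap π t) rfl
  map_id X := rfl
  map_comp t s := rfl

end Pullback

section Helpers

variable {C : Type u} [Semicategory.{v} C]

/-- Transport a hom along equalities of endpoints. -/
def castHom {a a' b b' : C} (h : a = a') (h' : b = b') (f : a ⟶ b) : (a' ⟶ b') :=
  h' ▸ h ▸ f

theorem castHom_heq {a a' b b' : C} (h : a = a') (h' : b = b') (f : a ⟶ b) :
    HEq (castHom h h' f) f := by subst h; subst h'; rfl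

theorem Semifunctor.hext {D : Type u} [Semicategory.{v} D] {F G : Semifunctor C D}
    (hobj : ∀ x, F.obj x = G.obj x)
    (hmap : ∀ {X Y : C} (f : X ⟶ Y), HEq (F.map f) (G.map f)) : F = G := by
  obtain ⟨Fo, Fm, hF⟩ := F
  obtain ⟨Go, Gm, hG⟩ := G
  have h1 : Fo = Go := funext hobj
  subst h1
  have h2 : @Fm = @Gm := by
    funext X Y f
    exact eq_of_heq (hmap f)
  subst h2
  rfl

theorem map_heq_of_heq {D : Type u} [Semicategory.{v} D] (F : Semifunctor C D)
    {a a' b b' : C} (ha : a = a') (hb : b = b') {f : a ⟶ b} {f' : a' ⟶ b'}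
    (hf : HEq f f') : HEq (F.map f) (F.map f') := by
  subst ha; subst hb; rw [eq_of_heq hf]


theorem comp_congr_heq {C : Type u} [Semicategory.{v} C] {a b b' c c' d : C}
    (hb : b = b') (hc : c = c')
    {f : a ⟶ b} {g : b ⟶ c} {h : c ⟶ d} {f' : a ⟶ b'} {g' : b' ⟶ c'} {h' : c' ⟶ d}
    (h1 : HEq f f') (h2 : HEq g g') (h3 : HEq h h') :
    Semicategory.comp f (Semicategory.comp g h) =
      Semicategory.comp f' (Semicategory.comp g' h') := by
  subst hb; subst hc
  rw [eq_of_heq h1, eq_of_heq h2, eq_of_heq h3]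


theorem comp_congr_heq2 {C : Type u} [Semicategory.{v} C] {a b b' c : C}
    (hb : b = b') {f : a ⟶ b} {g : b ⟶ c} {f' : a ⟶ b'} {g' : b' ⟶ c}
    (h1 : HEq f f') (h2 : HEq g g') :
    Semicategory.comp f g = Semicategory.comp f' g' := by
  subst hb
  rw [eq_of_heq h1, eq_of_heq h2]

end Helpers
section Fac

variable {Ee Bb : SemicatObj.{u}} (π : Ee ⟶ Bb)

/-- A lift of the factorization `(g, g')` for the morphism `f`. -/
structure Fac {b b' b'' : Bb.α} (g : b ⟶ b') (g' : b' ⟶ b'')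
    {e e'' : Ee.α} (f : e ⟶ e'') : Type u where
  m : Ee.α
  f₁ : e ⟶ m
  f₂ : m ⟶ e''
  comp_eq : Semicategory.comp f₁ f₂ = f
  hm : π.obj m = b'
  h1 : HEq (π.map f₁) g
  h2 : HEq (π.map f₂) g'

variable (H : ∀ {x y : Ee.α} (f : x ⟶ y) {z : Bb.α} (g₁ : π.obj x ⟶ z) (g₂ : z ⟶ π.obj y),
    π.map f = Semicategory.comp g₁ g₂ →
    ∃! p : Σ m : Ee.α, (x ⟶ m) × (m ⟶ y),
      Semicategory.comp p.2.1 p.2.2 = f ∧ π.obj p.1 = z ∧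
        HEq (π.map p.2.1) g₁ ∧ HEq (π.map p.2.2) g₂)

include H in
theorem fac_exists {b b' b'' : Bb.α} (g : b ⟶ b') (g' : b' ⟶ b'') {e e'' : Ee.α}
    (he : π.obj e = b) (he'' : π.obj e'' = b'') (f : e ⟶ e'')
    (hf : HEq (π.map f) (Semicategory.comp g g')) : Nonempty (Fac π g g' f) := by
  subst he; subst he''
  obtain ⟨⟨m, f₁, f₂⟩, ⟨hc, hm, h1, h2⟩, -⟩ := H f g g' (eq_of_heq hf)
  exact ⟨⟨m, f₁, f₂, hc, hm, h1, h2⟩⟩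

include H in
theorem fac_unique {b b' b'' : Bb.α} (g : b ⟶ b') (g' : b' ⟶ b'') {e e'' : Ee.α}
    (he : π.obj e = b) (he'' : π.obj e'' = b'') (f : e ⟶ e'')
    (hf : HEq (π.map f) (Semicategory.comp g g'))
    (F F' : Fac π g g' f) : F = F' := by
  subst he; subst he''
  obtain ⟨m, f₁, f₂, hc, hm, h1, h2⟩ := F
  obtain ⟨m', f₁', f₂', hc', hm', h1', h2'⟩ := F'
  obtain ⟨p, -, hu⟩ := H f g g' (eq_of_heq hf)
  have e1 := hu ⟨m, f₁, f₂⟩ ⟨hc, hm, h1, h2⟩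
  have e2 := hu ⟨m', f₁', f₂'⟩ ⟨hc', hm', h1', h2'⟩
  have e3 : (⟨m, f₁, f₂⟩ : Σ m : Ee.α, (e ⟶ m) × (m ⟶ e'')) = ⟨m', f₁', f₂'⟩ :=
    e1.trans e2.symm
  injection e3 with hmm hrest
  subst hmm
  have : (f₁, f₂) = (f₁', f₂') := eq_of_heq hrest
  injection this with i1 i2
  subst i1; subst i2
  rfl

/-- Choose a lift of a binary factorization. -/
noncomputable def fac {b b' b'' : Bb.α} (g : b ⟶ b') (g' : b' ⟶ b'') {e e'' : Ee.α}
    (he : π.obj e = b) (he'' : π.obj e'' = b'') (f : e ⟶ e'')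
    (hf : HEq (π.map f) (Semicategory.comp g g')) : Fac π g g' f :=
  (fac_exists π H g g' he he'' f hf).some

theorem fac_eq {b b' b'' : Bb.α} (g : b ⟶ b') (g' : b' ⟶ b'') {e e'' : Ee.α}
    (he : π.obj e = b) (he'' : π.obj e'' = b'') (f : e ⟶ e'')
    (hf : HEq (π.map f) (Semicategory.comp g g')) (F : Fac π g g' f) :
    fac π H g g' he he'' f hf = F :=
  fac_unique π H g g' he he'' f hf _ F


theorem fac_heq {b b' b'' : Bb.α} (g : b ⟶ b') (g' : b' ⟶ b'') {e₁ e₁' e'' : Ee.α}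
    (h : e₁ = e₁') {f : e₁ ⟶ e''} {f' : e₁' ⟶ e''} (hf : HEq f f')
    (he₁ : π.obj e₁ = b) (he₁' : π.obj e₁' = b) (he'' : π.obj e'' = b'')
    (pf : HEq (π.map f) (Semicategory.comp g g'))
    (pf' : HEq (π.map f') (Semicategory.comp g g')) :
    HEq (fac π H g g' he₁ he'' f pf) (fac π H g g' he₁' he'' f' pf') := by
  subst h
  have hff : f = f' := eq_of_heq hf
  subst hff
  rfl

theorem Fac.m_heq {b b' b'' : Bb.α} {g : b ⟶ b'} {g' : b' ⟶ b''} {e₁ e₁' e'' : Ee.α}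
    (h : e₁ = e₁') {f : e₁ ⟶ e''} {f' : e₁' ⟶ e''} (hf : HEq f f')
    {X : Fac π g g' f} {Y : Fac π g g' f'} (hXY : HEq X Y) : X.m = Y.m := by
  subst h
  have hff : f = f' := eq_of_heq hf
  subst hff
  rw [eq_of_heq hXY]

theorem Fac.f₁_heq {b b' b'' : Bb.α} {g : b ⟶ b'} {g' : b' ⟶ b''} {e₁ e₁' e'' : Ee.α}
    (h : e₁ = e₁') {f : e₁ ⟶ e''} {f' : e₁' ⟶ e''} (hf : HEq f f')
    {X : Fac π g g' f} {Y : Fac π g g' f'} (hXY : HEq X Y) : HEq X.f₁ Y.f₁ := by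
  subst h
  have hff : f = f' := eq_of_heq hf
  subst hff
  rw [eq_of_heq hXY]

theorem Fac.f₂_heq {b b' b'' : Bb.α} {g : b ⟶ b'} {g' : b' ⟶ b''} {e₁ e₁' e'' : Ee.α}
    (h : e₁ = e₁') {f : e₁ ⟶ e''} {f' : e₁' ⟶ e''} (hf : HEq f f')
    {X : Fac π g g' f} {Y : Fac π g g' f'} (hXY : HEq X Y) : HEq X.f₂ Y.f₂ := by
  subst h
  have hff : f = f' := eq_of_heq hf
  subst hff
  rw [eq_of_heq hXY]

end Fac
section RConstruction

variable {Ee Bb : SemicatObj.{u}} (π : Ee ⟶ Bb)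

/-- Fiberwise sections: an assignment of objects of `Y` over `b` to objects of `E` over `b`. -/
def Secty (Y : Over Bb) (b : Bb.α) : Type u :=
  ∀ e : Ee.α, π.obj e = b → {v : Y.left.α // Y.hom.obj v = b}

/-- Morphism data over `g` for the would-be exponential. -/
structure RHomData (Y : Over Bb) {b b' : Bb.α} (g : b ⟶ b')
    (s : Secty π Y b) (s' : Secty π Y b') : Type u where
  t : ∀ (e e' : Ee.α) (he : π.obj e = b) (he' : π.obj e' = b') (f : e ⟶ e'),
      HEq (π.map f) g → ((s e he).1 ⟶ (s' e' he').1)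
  ht : ∀ e e' he he' f hf, HEq (Y.hom.map (t e e' he he' f hf)) g

/-- Objects of the would-be exponential. -/
def RObj (Y : Over Bb) : Type u := Σ b : Bb.α, Secty π Y b

/-- Morphisms of the would-be exponential. -/
def RHom (Y : Over Bb) (p p' : RObj π Y) : Type u :=
  Σ g : p.1 ⟶ p'.1, RHomData π Y g p.2 p'.2

theorem RHomData_heq {Y : Over Bb} {b b' : Bb.α} {g g' : b ⟶ b'}
    {s : Secty π Y b} {s' : Secty π Y b'} (hg : g = g')
    {D : RHomData π Y g s s'} {D' : RHomData π Y g' s s'}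
    (h : ∀ e e' he he' f hf hf', D.t e e' he he' f hf = D'.t e e' he he' f hf') :
    HEq D D' := by
  subst hg
  suffices h2 : D = D' by rw [h2]
  obtain ⟨t, ht⟩ := D; obtain ⟨t', ht'⟩ := D'
  have : t = t' := by
    funext e e' he he' f hf
    exact h e e' he he' f hf hf
  subst this; rfl


theorem RHomData.t_congr {Y : Over Bb} {b b' : Bb.α} {g : b ⟶ b'}
    {s : Secty π Y b} {s' : Secty π Y b'} (D : RHomData π Y g s s')
    {e₁ e₁' e₂ e₂' : Ee.α} (h₁ : e₁ = e₁') (h₂ : e₂ = e₂')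
    (p1 : π.obj e₁ = b) (p2 : π.obj e₁' = b) (q1 : π.obj e₂ = b') (q2 : π.obj e₂' = b')
    {f : e₁ ⟶ e₂} {f' : e₁' ⟶ e₂'} (hf : HEq f f')
    (pf : HEq (π.map f) g) (pf' : HEq (π.map f') g) :
    HEq (D.t e₁ e₂ p1 q1 f pf) (D.t e₁' e₂' p2 q2 f' pf') := by
  subst h₁; subst h₂
  have hff : f = f' := eq_of_heq hf
  subst hff
  rfl

theorem sec_congr {Y : Over Bb} {b : Bb.α} (s : Secty π Y b) {e e' : Ee.α}
    (h : e = e') (he : π.obj e = b) (he' : π.obj e' = b) : (s e he).1 = (s e' he').1 := by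
  subst h; rfl

variable (H : ∀ {x y : Ee.α} (f : x ⟶ y) {z : Bb.α} (g₁ : π.obj x ⟶ z) (g₂ : z ⟶ π.obj y),
    π.map f = Semicategory.comp g₁ g₂ →
    ∃! p : Σ m : Ee.α, (x ⟶ m) × (m ⟶ y),
      Semicategory.comp p.2.1 p.2.2 = f ∧ π.obj p.1 = z ∧
        HEq (π.map p.2.1) g₁ ∧ HEq (π.map p.2.2) g₂)

/-- Composition in the would-be exponential. -/
noncomputable def rcomp {Y : Over Bb} {p p' p'' : RObj π Y}
    (K : RHom π Y p p') (K' : RHom π Y p' p'') : RHom π Y p p'' :=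
  ⟨Semicategory.comp K.1 K'.1,
   { t := fun e e'' he he'' f hf =>
       let F := fac π H K.1 K'.1 he he'' f hf
       Semicategory.comp (K.2.t e F.m he F.hm F.f₁ F.h1) (K'.2.t F.m e'' F.hm he'' F.f₂ F.h2),
     ht := fun e e'' he he'' f hf => by
       dsimp only
       rw [Y.hom.map_comp]
       exact Semicategory.heq_comp ((p.2 e he).2) ((p'.2 _ _).2) ((p''.2 e'' he'').2)
         (K.2.ht _ _ _ _ _ _) (K'.2.ht _ _ _ _ _ _) }⟩

theorem rcomp_assoc {Y : Over Bb} {p p' p'' p''' : RObj π Y}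
    (K : RHom π Y p p') (K' : RHom π Y p' p'') (K'' : RHom π Y p'' p''') :
    rcomp π H (rcomp π H K K') K'' = rcomp π H K (rcomp π H K' K'') := by
  apply Sigma.ext
  · exact Semicategory.assoc _ _ _
  · apply RHomData_heq π (Semicategory.assoc _ _ _)
    intro e e''' he he''' f hf hf'
    dsimp only [rcomp]
    set F := fac π H (Semicategory.comp K.1 K'.1) K''.1 he he''' f hf with hF
    set Fi := fac π H K.1 K'.1 he F.hm F.f₁ F.h1 with hFi
    set G := fac π H K.1 (Semicategory.comp K'.1 K''.1) he he''' f hf' with hGdef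
    set Gi := fac π H K'.1 K''.1 G.hm he''' G.f₂ G.h2 with hGidef
    have pf1 : Semicategory.comp Fi.f₁ (Semicategory.comp Fi.f₂ F.f₂) = f := by
      rw [← Semicategory.assoc, Fi.comp_eq, F.comp_eq]
    have pf2 : HEq (π.map (Semicategory.comp Fi.f₂ F.f₂)) (Semicategory.comp K'.1 K''.1) := by
      rw [π.map_comp]
      exact Semicategory.heq_comp Fi.hm F.hm he''' Fi.h2 F.h2
    have hG : G = ⟨Fi.m, Fi.f₁, Semicategory.comp Fi.f₂ F.f₂, pf1, Fi.hm, Fi.h1, pf2⟩ :=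
      fac_eq π H _ _ he he''' f hf' _
    have hGm : G.m = Fi.m := by rw [hG]
    have hGf₁ : HEq G.f₁ Fi.f₁ := by rw [hG]
    have hGf₂ : HEq G.f₂ (Semicategory.comp Fi.f₂ F.f₂) := by rw [hG]
    have h1 : HEq Gi (fac π H K'.1 K''.1 Fi.hm he''' (Semicategory.comp Fi.f₂ F.f₂) pf2) :=
      fac_heq π H K'.1 K''.1 hGm hGf₂ G.hm Fi.hm he''' G.h2 pf2
    have h2 : fac π H K'.1 K''.1 Fi.hm he''' (Semicategory.comp Fi.f₂ F.f₂) pf2 =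
        ⟨F.m, Fi.f₂, F.f₂, rfl, F.hm, Fi.h2, F.h2⟩ :=
      fac_eq π H _ _ Fi.hm he''' _ _ _
    have h3 : HEq Gi (⟨F.m, Fi.f₂, F.f₂, rfl, F.hm, Fi.h2, F.h2⟩ :
        Fac π K'.1 K''.1 (Semicategory.comp Fi.f₂ F.f₂)) := h1.trans (heq_of_eq h2)
    have hGim : Gi.m = F.m := Fac.m_heq π hGm hGf₂ h3
    have hGif₁ : HEq Gi.f₁ Fi.f₂ := Fac.f₁_heq π hGm hGf₂ h3
    have hGif₂ : HEq Gi.f₂ F.f₂ := Fac.f₂_heq π hGm hGf₂ h3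
    rw [Semicategory.assoc]
    exact comp_congr_heq (sec_congr π p'.2 hGm.symm Fi.hm G.hm)
      (sec_congr π p''.2 hGim.symm F.hm Gi.hm)
      (RHomData.t_congr π K.2 rfl hGm.symm he he Fi.hm G.hm hGf₁.symm Fi.h1 G.h1)
      (RHomData.t_congr π K'.2 hGm.symm hGim.symm Fi.hm G.hm F.hm Gi.hm hGif₁.symm Fi.h2 Gi.h1)
      (RHomData.t_congr π K''.2 hGim.symm rfl F.hm Gi.hm he''' he''' hGif₂.symm F.h2 Gi.h2)

/-- The semicategory structure on the would-be exponential. -/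
noncomputable def rsemicat (Y : Over Bb) : Semicategory.{u} (RObj π Y) where
  Hom p p' := RHom π Y p p'
  comp K K' := rcomp π H K K'
  assoc K K' K'' := rcomp_assoc π H K K' K''

/-- The would-be exponential as a semicategory. -/
noncomputable def RSC (Y : Over Bb) : SemicatObj.{u} := ⟨RObj π Y, rsemicat π H Y⟩

/-- The structure map of the would-be exponential. -/
noncomputable def RtoB (Y : Over Bb) : RSC π H Y ⟶ Bb :=
  ⟨Sigma.fst, fun K => K.1, fun _ _ => rfl⟩

/-- The would-be exponential as an object over `B`. -/
noncomputable def Rov (Y : Over Bb) : Over Bb := Over.mk (RtoB π H Y)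

end RConstruction
section REquiv

variable {Ee Bb : SemicatObj.{u}} (π : Ee ⟶ Bb)

theorem sf_obj_eq {C D : SemicatObj.{u}} {F G : C ⟶ D} (h : F = G) (x : C.α) :
    F.obj x = G.obj x := by rw [h]

theorem RObj_ext {Y : Over Bb} {p p' : RObj π Y} (h1 : p.1 = p'.1)
    (h2 : ∀ e he he', (p.2 e he).1 = (p'.2 e he').1) : p = p' := by
  obtain ⟨b, s⟩ := p; obtain ⟨b', s'⟩ := p'
  cases h1
  have : s = s' := by
    funext e he
    exact Subtype.ext (h2 e he he)
  rw [this]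

theorem RHom_heq {Y : Over Bb} {p p' q q' : RObj π Y} (hp : p = q) (hp' : p' = q')
    {K : RHom π Y p p'} {K' : RHom π Y q q'} (h1 : HEq K.1 K'.1)
    (h2 : ∀ e e' hep heq hep' heq' f hf hf',
      HEq (K.2.t e e' hep hep' f hf) (K'.2.t e e' heq heq' f hf')) :
    HEq K K' := by
  subst hp; subst hp'
  obtain ⟨g, D⟩ := K; obtain ⟨g', D'⟩ := K'
  have hg : g = g' := eq_of_heq h1
  subst hg
  have : HEq D D' := by
    apply RHomData_heq π rfl
    intro e e' he he' f hf hf'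
    exact eq_of_heq (h2 e e' he he he' he' f hf hf')
  rw [eq_of_heq this]; exact HEq.rfl

theorem RHom_t_congr {Y : Over Bb} {p p' : RObj π Y} {K K' : RHom π Y p p'}
    (h : K = K') (e e' : Ee.α) (he : π.obj e = p.1) (he' : π.obj e' = p'.1)
    (f : e ⟶ e') (pf : HEq (π.map f) K.1) (pf' : HEq (π.map f) K'.1) :
    K.2.t e e' he he' f pf = K'.2.t e e' he he' f pf' := by
  subst h; rfl

variable (H : ∀ {x y : Ee.α} (f : x ⟶ y) {z : Bb.α} (g₁ : π.obj x ⟶ z) (g₂ : z ⟶ π.obj y),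
    π.map f = Semicategory.comp g₁ g₂ →
    ∃! p : Σ m : Ee.α, (x ⟶ m) × (m ⟶ y),
      Semicategory.comp p.2.1 p.2.2 = f ∧ π.obj p.1 = z ∧
        HEq (π.map p.2.1) g₁ ∧ HEq (π.map p.2.2) g₂)

/-- The underlying semifunctor of the transpose `X ⟶ R Y` of `u : X ×_B E ⟶ Y`. -/
noncomputable def toRleft (X Y : Over Bb) (u : (sliceProd π).obj X ⟶ Y) :
    Semifunctor X.left.α (RSC π H Y).α where
  obj x := ⟨X.hom.obj x, fun e he =>
    ⟨u.left.obj ⟨(x, e), he.symm⟩,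
      (sf_obj_eq (Over.w u) ⟨(x, e), he.symm⟩).trans he⟩⟩
  map {x x'} k :=
    ⟨X.hom.map k,
     { t := fun e e' he he' f hfq => u.left.map ⟨(k, f), hfq.symm⟩,
       ht := fun e e' he he' f hfq => by
         refine HEq.trans ?_ hfq
         exact Semifunctor.map_heq (Over.w u)
           (X := ⟨(x, e), he.symm⟩) (Y := ⟨(x', e'), he'.symm⟩) ⟨(k, f), hfq.symm⟩ }⟩
  map_comp {x x' x''} k k' := by
    apply Sigma.ext
    · exact X.hom.map_comp k k'
    · apply RHomData_heq π (X.hom.map_comp k k')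
      intro e e'' he he'' f hf hf'
      set F := fac π H (X.hom.map k) (X.hom.map k') he he'' f hf' with hFdef
      let P0 : PbObj π X := ⟨(x, e), he.symm⟩
      let P1 : PbObj π X := ⟨(x', F.m), F.hm.symm⟩
      let P2 : PbObj π X := ⟨(x'', e''), he''.symm⟩
      have harg : (⟨(Semicategory.comp k k', f), hf.symm⟩ : P0 ⟶ P2) =
          (Semicategory.comp (⟨(k, F.f₁), F.h1.symm⟩ : P0 ⟶ P1)
            (⟨(k', F.f₂), F.h2.symm⟩ : P1 ⟶ P2) : P0 ⟶ P2) := by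
        apply Subtype.ext
        show (Semicategory.comp k k', f) = (Semicategory.comp k k', Semicategory.comp F.f₁ F.f₂)
        rw [F.comp_eq]
      have key : u.left.map ((⟨(Semicategory.comp k k', f), hf.symm⟩ : P0 ⟶ P2)) =
          Semicategory.comp
            (u.left.map ((⟨(k, F.f₁), F.h1.symm⟩ : P0 ⟶ P1)) :
              u.left.obj P0 ⟶ u.left.obj P1)
            (u.left.map ((⟨(k', F.f₂), F.h2.symm⟩ : P1 ⟶ P2))) := by
        rw [harg]; exact u.left.map_comp _ _
      exact key

/-- The transpose `X ⟶ R Y` of `u : X ×_B E ⟶ Y`. -/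
noncomputable def toR (X Y : Over Bb) (u : (sliceProd π).obj X ⟶ Y) : X ⟶ Rov π H Y :=
  Over.homMk (toRleft π H X Y u) (by
    apply Semifunctor.hext
    · intro x; rfl
    · intro x x' k; exact HEq.rfl)

/-- The underlying semifunctor of the transpose `X ×_B E ⟶ Y` of `v : X ⟶ R Y`. -/
noncomputable def fromRleft (X Y : Over Bb) (v : X ⟶ Rov π H Y) :
    Semifunctor (PbObj π X) Y.left.α where
  obj p := ((v.left.obj p.val.1).2 p.val.2
    (p.prop.symm.trans (sf_obj_eq (Over.w v) p.val.1).symm)).1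
  map {p p'} κ := (v.left.map κ.val.1).2.t p.val.2 p'.val.2
    (p.prop.symm.trans (sf_obj_eq (Over.w v) p.val.1).symm)
    (p'.prop.symm.trans (sf_obj_eq (Over.w v) p'.val.1).symm)
    κ.val.2
    (κ.prop.symm.trans (Semifunctor.map_heq (Over.w v) κ.val.1).symm)
  map_comp {p p' p''} κ κ' := by
    have pf' : HEq (π.map (Semicategory.comp κ.val.2 κ'.val.2))
        ((rcomp π H (v.left.map κ.val.1) (v.left.map κ'.val.1)).1) := by
      rw [π.map_comp]
      exact Semicategory.heq_comp
        (p.prop.symm.trans (sf_obj_eq (Over.w v) p.val.1).symm)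
        (p'.prop.symm.trans (sf_obj_eq (Over.w v) p'.val.1).symm)
        (p''.prop.symm.trans (sf_obj_eq (Over.w v) p''.val.1).symm)
        (κ.prop.symm.trans (Semifunctor.map_heq (Over.w v) κ.val.1).symm)
        (κ'.prop.symm.trans (Semifunctor.map_heq (Over.w v) κ'.val.1).symm)
    refine (RHom_t_congr π (v.left.map_comp κ.val.1 κ'.val.1) _ _ _ _
      (Semicategory.comp κ.val.2 κ'.val.2) _ pf').trans ?_
    have hFe := fac_eq π H (v.left.map κ.val.1).1 (v.left.map κ'.val.1).1
      (p.prop.symm.trans (sf_obj_eq (Over.w v) p.val.1).symm)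
      (p''.prop.symm.trans (sf_obj_eq (Over.w v) p''.val.1).symm)
      (Semicategory.comp κ.val.2 κ'.val.2) pf'
      ⟨p'.val.2, κ.val.2, κ'.val.2, rfl,
        (p'.prop.symm.trans (sf_obj_eq (Over.w v) p'.val.1).symm),
        (κ.prop.symm.trans (Semifunctor.map_heq (Over.w v) κ.val.1).symm),
        (κ'.prop.symm.trans (Semifunctor.map_heq (Over.w v) κ'.val.1).symm)⟩
    set F := fac π H (v.left.map κ.val.1).1 (v.left.map κ'.val.1).1
      (p.prop.symm.trans (sf_obj_eq (Over.w v) p.val.1).symm)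
      (p''.prop.symm.trans (sf_obj_eq (Over.w v) p''.val.1).symm)
      (Semicategory.comp κ.val.2 κ'.val.2) pf' with hFdef
    have hFm : F.m = p'.val.2 := by rw [hFe]
    have hFf₁ : HEq F.f₁ κ.val.2 := by rw [hFe]
    have hFf₂ : HEq F.f₂ κ'.val.2 := by rw [hFe]
    exact comp_congr_heq2 (sec_congr π (v.left.obj p'.val.1).2 hFm F.hm
        (p'.prop.symm.trans (sf_obj_eq (Over.w v) p'.val.1).symm))
      (RHomData.t_congr π (v.left.map κ.val.1).2 rfl hFm
        (p.prop.symm.trans (sf_obj_eq (Over.w v) p.val.1).symm)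
        (p.prop.symm.trans (sf_obj_eq (Over.w v) p.val.1).symm)
        F.hm (p'.prop.symm.trans (sf_obj_eq (Over.w v) p'.val.1).symm)
        hFf₁ F.h1
        (κ.prop.symm.trans (Semifunctor.map_heq (Over.w v) κ.val.1).symm))
      (RHomData.t_congr π (v.left.map κ'.val.1).2 hFm rfl
        F.hm (p'.prop.symm.trans (sf_obj_eq (Over.w v) p'.val.1).symm)
        (p''.prop.symm.trans (sf_obj_eq (Over.w v) p''.val.1).symm)
        (p''.prop.symm.trans (sf_obj_eq (Over.w v) p''.val.1).symm)
        hFf₂ F.h2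
        (κ'.prop.symm.trans (Semifunctor.map_heq (Over.w v) κ'.val.1).symm))

end REquiv
section RAdj

variable {Ee Bb : SemicatObj.{u}} (π : Ee ⟶ Bb)
variable (H : ∀ {x y : Ee.α} (f : x ⟶ y) {z : Bb.α} (g₁ : π.obj x ⟶ z) (g₂ : z ⟶ π.obj y),
    π.map f = Semicategory.comp g₁ g₂ →
    ∃! p : Σ m : Ee.α, (x ⟶ m) × (m ⟶ y),
      Semicategory.comp p.2.1 p.2.2 = f ∧ π.obj p.1 = z ∧
        HEq (π.map p.2.1) g₁ ∧ HEq (π.map p.2.2) g₂)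

/-- The transpose `X ×_B E ⟶ Y` of `v : X ⟶ R Y`. -/
noncomputable def fromR (X Y : Over Bb) (v : X ⟶ Rov π H Y) : (sliceProd π).obj X ⟶ Y :=
  Over.homMk (fromRleft π H X Y v) (by
    apply Semifunctor.hext
    · intro p
      show _ = π.obj p.val.2
      exact (((v.left.obj p.val.1).2 p.val.2
        (p.prop.symm.trans (sf_obj_eq (Over.w v) p.val.1).symm)).2).trans
        ((sf_obj_eq (Over.w v) p.val.1).trans p.prop)
    · intro p p' κ
      show HEq _ (π.map κ.val.2)
      exact ((v.left.map κ.val.1).2.ht _ _ _ _ _ _).trans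
        ((Semifunctor.map_heq (Over.w v) κ.val.1).trans κ.prop))

/-- The hom-equivalence exhibiting the exponential as a right adjoint. -/
noncomputable def requiv (X Y : Over Bb) : ((sliceProd π).obj X ⟶ Y) ≃ (X ⟶ Rov π H Y) where
  toFun := toR π H X Y
  invFun := fromR π H X Y
  left_inv u := by
    apply CategoryTheory.Over.OverMorphism.ext
    rfl
  right_inv v := by
    have hobj : ∀ x, (toRleft π H X Y (fromR π H X Y v)).obj x = v.left.obj x := fun x =>
      RObj_ext π ((sf_obj_eq (Over.w v) x).symm) (fun e he he' => rfl)
    apply CategoryTheory.Over.OverMorphism.ext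
    apply Semifunctor.hext
    · exact hobj
    · intro x x' k
      apply RHom_heq π (hobj x) (hobj x')
      · exact (Semifunctor.map_heq (Over.w v) k).symm
      · intro e e' hep heq hep' heq' f hfp hfq
        exact HEq.rfl

theorem requiv_nat {X' X Y : Over Bb} (f : X' ⟶ X) (g : (sliceProd π).obj X ⟶ Y) :
    requiv π H X' Y ((sliceProd π).map f ≫ g) = f ≫ requiv π H X Y g := by
  have hobj : ∀ x', (toRleft π H X' Y ((sliceProd π).map f ≫ g)).obj x' =
      (toRleft π H X Y g).obj (f.left.obj x') := fun x' =>
    RObj_ext π ((sf_obj_eq (Over.w f) x').symm) (fun e he he' => rfl)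
  apply CategoryTheory.Over.OverMorphism.ext
  apply Semifunctor.hext
  · exact hobj
  · intro x' x'' k
    apply RHom_heq π (hobj x') (hobj x'')
    · exact (Semifunctor.map_heq (Over.w f) k).symm
    · intro e e' hep heq hep' heq' fe hfp hfq
      exact HEq.rfl

include H in
theorem isLeftAdjoint_of_lifts : (sliceProd π).IsLeftAdjoint :=
  ⟨⟨_, ⟨Adjunction.adjunctionOfEquivRight (fun X Y => requiv π H X Y)
    (fun X' X Y f g => requiv_nat π H f g)⟩⟩⟩

end RAdj
section ForwardGadgets

/-- The walking composable pair (three objects). -/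
inductive Tri : Type u where
  | t0 | t1 | t2

/-- Morphisms of the walking composable pair. -/
inductive TriHom : Tri.{u} → Tri.{u} → Type u where
  | h01 : TriHom .t0 .t1
  | h12 : TriHom .t1 .t2
  | h02 : TriHom .t0 .t2

/-- Composition of `TriHom`s. -/
def tricomp : {i j k : Tri.{u}} → TriHom i j → TriHom j k → TriHom i k
  | _, _, _, .h01, .h12 => .h02
  | _, _, _, .h12, d => nomatch d
  | _, _, _, .h02, d => nomatch d

instance : Semicategory.{u} Tri.{u} where
  Hom := TriHom
  comp f g := tricomp f g
  assoc f g h := by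
    cases f <;> cases g <;> cases h

/-- The walking arrow (two objects). -/
inductive Duo : Type u where
  | d0 | d1

/-- The morphism of the walking arrow. -/
inductive DuoHom : Duo.{u} → Duo.{u} → Type u where
  | h : DuoHom .d0 .d1

/-- Composition of `DuoHom`s (vacuous). -/
def duocomp : {i j k : Duo.{u}} → DuoHom i j → DuoHom j k → DuoHom i k
  | _, _, _, .h, d => nomatch d

instance : Semicategory.{u} Duo.{u} where
  Hom := DuoHom
  comp f g := duocomp f g
  assoc f g h' := by cases f <;> cases g

/-- A single object with no morphisms. -/
inductive Uno : Type u where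
  | u0

instance : Semicategory.{u} Uno.{u} where
  Hom _ _ := PEmpty.{u + 1}
  comp f _ := f.elim
  assoc f _ _ := f.elim

/-- `Tri` as a semicategory object. -/
def TriSC : SemicatObj.{u} := ⟨Tri, inferInstance⟩
/-- `Duo` as a semicategory object. -/
def DuoSC : SemicatObj.{u} := ⟨Duo, inferInstance⟩
/-- `Uno` as a semicategory object. -/
def UnoSC : SemicatObj.{u} := ⟨Uno, inferInstance⟩

variable {Ee Bb : SemicatObj.{u}} (π : Ee ⟶ Bb)
variable {x y : Ee.α} {z : Bb.α} (g₁ : π.obj x ⟶ z) (g₂ : z ⟶ π.obj y)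

/-- Object part of the classifier of `(g₁, g₂)`. -/
def triObj : Tri.{u} → Bb.α
  | .t0 => π.obj x
  | .t1 => z
  | .t2 => π.obj y

/-- Morphism part of the classifier of `(g₁, g₂)`. -/
def triMap : {i j : Tri.{u}} → TriHom i j → (triObj π (x := x) (y := y) (z := z) i ⟶ triObj π (x := x) (y := y) (z := z) j)
  | _, _, .h01 => g₁
  | _, _, .h12 => g₂
  | _, _, .h02 => Semicategory.comp g₁ g₂

theorem triMap_comp : ∀ {i j k : Tri.{u}} (d : TriHom i j) (d' : TriHom j k),
    triMap π g₁ g₂ (tricomp d d') = Semicategory.comp (triMap π g₁ g₂ d) (triMap π g₁ g₂ d') := by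
  intro i j k d d'
  cases d <;> cases d' <;> rfl

/-- Classify the composable pair `(g₁, g₂)`. -/
def triToB : TriSC.{u} ⟶ Bb where
  obj i := triObj π (x := x) (y := y) (z := z) i
  map d := triMap π g₁ g₂ d
  map_comp d d' := triMap_comp π g₁ g₂ d d'

/-- Classify `g₁`. -/
def duoObjL : Duo.{u} → Bb.α
  | .d0 => π.obj x
  | .d1 => z

def duoMapL : {i j : Duo.{u}} → DuoHom i j → (duoObjL π (x := x) (z := z) i ⟶ duoObjL π (x := x) (z := z) j)
  | _, _, .h => g₁

def duoL : DuoSC.{u} ⟶ Bb where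
  obj i := duoObjL π (x := x) (z := z) i
  map d := duoMapL π g₁ d
  map_comp d d' := by rcases d with ⟨⟩ <;> rcases d' with ⟨⟩

/-- Classify `g₂`. -/
def duoObjR : Duo.{u} → Bb.α
  | .d0 => z
  | .d1 => π.obj y

def duoMapR : {i j : Duo.{u}} → DuoHom i j → (duoObjR π (y := y) (z := z) i ⟶ duoObjR π (y := y) (z := z) j)
  | _, _, .h => g₂

def duoR : DuoSC.{u} ⟶ Bb where
  obj i := duoObjR π (y := y) (z := z) i
  map d := duoMapR π g₂ d
  map_comp d d' := by rcases d with ⟨⟩ <;> rcases d' with ⟨⟩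

/-- Classify `z`. -/
def unoZ (w : Bb.α) : UnoSC.{u} ⟶ Bb where
  obj _ := w
  map d := d.elim
  map_comp d _ := d.elim

/-- The walking composable pair over `B`. -/
def OPov : Over Bb := Over.mk (triToB π g₁ g₂)
/-- The first walking arrow over `B`. -/
def OLov : Over Bb := Over.mk (duoL π g₁)
/-- The second walking arrow over `B`. -/
def ORov : Over Bb := Over.mk (duoR π g₂)
/-- The walking object over `B` at `z`. -/
def ONov (w : Bb.α) : Over Bb := Over.mk (unoZ (Bb := Bb) w)

/-- `nL : N ⟶ L` picks the target. -/
def nL : ONov (Bb := Bb) z ⟶ OLov π g₁ :=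
  Over.homMk ⟨fun _ => Duo.d1, fun d => d.elim, fun d _ => d.elim⟩ (by
    apply Semifunctor.hext
    · intro i; cases i; rfl
    · intro i j d; exact d.elim)

/-- `nR : N ⟶ R` picks the source. -/
def nR : ONov (Bb := Bb) z ⟶ ORov π g₂ :=
  Over.homMk ⟨fun _ => Duo.d0, fun d => d.elim, fun d _ => d.elim⟩ (by
    apply Semifunctor.hext
    · intro i; cases i; rfl
    · intro i j d; exact d.elim)

def duoTriL : Duo.{u} → Tri.{u}
  | .d0 => .t0
  | .d1 => .t1

def duoTriMapL : {i j : Duo.{u}} → DuoHom i j → TriHom (duoTriL i) (duoTriL j)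
  | _, _, .h => .h01

def duoTriR : Duo.{u} → Tri.{u}
  | .d0 => .t1
  | .d1 => .t2

def duoTriMapR : {i j : Duo.{u}} → DuoHom i j → TriHom (duoTriR i) (duoTriR j)
  | _, _, .h => .h12

/-- `iL : L ⟶ P` is the first arrow. -/
def iL : OLov π g₁ ⟶ OPov π g₁ g₂ :=
  Over.homMk
    ⟨fun i => duoTriL i, fun d => duoTriMapL d, fun d d' => by rcases d with ⟨⟩ <;> rcases d' with ⟨⟩⟩ (by
    apply Semifunctor.hext
    · intro i; cases i <;> rfl
    · intro i j d; rcases d with ⟨⟩; exact HEq.rfl)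

/-- `iR : R ⟶ P` is the second arrow. -/
def iR : ORov π g₂ ⟶ OPov π g₁ g₂ :=
  Over.homMk
    ⟨fun i => duoTriR i, fun d => duoTriMapR d, fun d d' => by rcases d with ⟨⟩ <;> rcases d' with ⟨⟩⟩ (by
    apply Semifunctor.hext
    · intro i; cases i <;> rfl
    · intro i j d; rcases d with ⟨⟩; exact HEq.rfl)

theorem nLiL_eq_nRiR : nL π g₁ ≫ iL π g₁ g₂ = nR π g₂ ≫ iR π g₁ g₂ := by
  apply CategoryTheory.Over.OverMorphism.ext
  apply Semifunctor.hext
  · intro i; cases i; rfl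
  · intro i j d; exact d.elim

end ForwardGadgets
section ForwardQ

variable {Ee Bb : SemicatObj.{u}} (π : Ee ⟶ Bb)
variable {x y : Ee.α} {z : Bb.α} (g₁ : π.obj x ⟶ z) (g₂ : z ⟶ π.obj y)

/-- Objects of the comparison semicategory `Q`. -/
def QObj : Type u := {p : Tri.{u} × Ee.α // (triToB π g₁ g₂).obj p.1 = π.obj p.2}

/-- Morphism data of the comparison semicategory: over `h02` we take formal
composable pairs. -/
def QData : {i j : Tri.{u}} → TriHom i j → Ee.α → Ee.α → Type u
  | _, _, .h01, e, e' => {k : e ⟶ e' // HEq (π.map k) g₁}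
  | _, _, .h12, e, e' => {k : e ⟶ e' // HEq (π.map k) g₂}
  | _, _, .h02, e, e' => Σ' (m : Ee.α) (k₁ : e ⟶ m) (k₂ : m ⟶ e'),
      π.obj m = z ∧ HEq (π.map k₁) g₁ ∧ HEq (π.map k₂) g₂

/-- Morphisms of the comparison semicategory. -/
def QHom (p q : QObj π g₁ g₂) : Type u :=
  Σ' d : TriHom p.val.1 q.val.1, QData π g₁ g₂ d p.val.2 q.val.2

/-- Composition of the morphism data. -/
def qdcomp {e e' e'' : Ee.α} : {i j k : Tri.{u}} → (d : TriHom i j) → (d' : TriHom j k) →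
    ((triToB π g₁ g₂).obj j = π.obj e') → QData π g₁ g₂ d e e' → QData π g₁ g₂ d' e' e'' →
    QData π g₁ g₂ (tricomp d d') e e''
  | _, _, _, .h01, .h12, hm, c, c' => ⟨e', c.1, c'.1, hm.symm, c.2, c'.2⟩
  | _, _, _, .h12, d', _, _, _ => nomatch d'
  | _, _, _, .h02, d', _, _, _ => nomatch d'

instance qsemicat : Semicategory.{u} (QObj π g₁ g₂) where
  Hom p q := QHom π g₁ g₂ p q
  comp {p q r} k l := ⟨tricomp k.1 l.1, qdcomp π g₁ g₂ k.1 l.1 q.prop k.2 l.2⟩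
  assoc {p q r s} k l m := by
    obtain ⟨⟨pi, pe⟩, hp⟩ := p
    obtain ⟨⟨qi, qe⟩, hq⟩ := q
    obtain ⟨⟨ri, re⟩, hr⟩ := r
    obtain ⟨⟨si, se⟩, hs⟩ := s
    obtain ⟨d, c⟩ := k
    obtain ⟨d', c'⟩ := l
    obtain ⟨d'', c''⟩ := m
    cases d <;> cases d' <;> cases d''

/-- `Q` as a semicategory object. -/
def QSC : SemicatObj.{u} := ⟨QObj π g₁ g₂, qsemicat π g₁ g₂⟩

/-- Projection of morphism data to `B`. -/
def qdToB : {i j : Tri.{u}} → {e e' : Ee.α} → (d : TriHom i j) → QData π g₁ g₂ d e e' →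
    (π.obj e ⟶ π.obj e')
  | _, _, _, _, .h01, c => π.map c.1
  | _, _, _, _, .h12, c => π.map c.1
  | _, _, _, _, .h02, c => Semicategory.comp (π.map c.2.1) (π.map c.2.2.1)

/-- The structure map `Q ⟶ B`. -/
def qToB : QSC π g₁ g₂ ⟶ Bb where
  obj p := π.obj p.val.2
  map k := qdToB π g₁ g₂ k.1 k.2
  map_comp {p q r} k l := by
    obtain ⟨⟨pi, pe⟩, hp⟩ := p
    obtain ⟨⟨qi, qe⟩, hq⟩ := q
    obtain ⟨⟨ri, re⟩, hr⟩ := r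
    obtain ⟨d, c⟩ := k
    obtain ⟨d', c'⟩ := l
    cases d <;> cases d' <;> rfl

/-- `Q` as an object over `B`. -/
def QOver : Over Bb := Over.mk (qToB π g₁ g₂)

/-- The left leg `E ×_B L ⟶ Q`. -/
def alphaLeft : Semifunctor (PbObj π (OLov π g₁)) (QObj π g₁ g₂) where
  obj p := match p with
    | ⟨(.d0, e), hp⟩ => ⟨(.t0, e), hp⟩
    | ⟨(.d1, e), hp⟩ => ⟨(.t1, e), hp⟩
  map {p q} κ := match p, q, κ with
    | ⟨(.d0, _), _⟩, ⟨(.d1, _), _⟩, ⟨(.h, fe), pf⟩ => ⟨.h01, ⟨fe, pf.symm⟩⟩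
    | ⟨(.d0, _), _⟩, ⟨(.d0, _), _⟩, ⟨(d, _), _⟩ => nomatch d
    | ⟨(.d1, _), _⟩, ⟨(.d0, _), _⟩, ⟨(d, _), _⟩ => nomatch d
    | ⟨(.d1, _), _⟩, ⟨(.d1, _), _⟩, ⟨(d, _), _⟩ => nomatch d
  map_comp {p q r} κ κ' := by
    obtain ⟨⟨pi, pe⟩, hp⟩ := p
    obtain ⟨⟨qi, qe⟩, hq⟩ := q
    obtain ⟨⟨ri, re⟩, hr⟩ := r
    obtain ⟨⟨d, fe⟩, pf⟩ := κ
    obtain ⟨⟨d', fe'⟩, pf'⟩ := κ'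
    rcases d with ⟨⟩ <;> rcases d' with ⟨⟩

/-- The right leg `E ×_B R ⟶ Q`. -/
def betaLeft : Semifunctor (PbObj π (ORov π g₂)) (QObj π g₁ g₂) where
  obj p := match p with
    | ⟨(.d0, e), hp⟩ => ⟨(.t1, e), hp⟩
    | ⟨(.d1, e), hp⟩ => ⟨(.t2, e), hp⟩
  map {p q} κ := match p, q, κ with
    | ⟨(.d0, _), _⟩, ⟨(.d1, _), _⟩, ⟨(.h, fe), pf⟩ => ⟨.h12, ⟨fe, pf.symm⟩⟩
    | ⟨(.d0, _), _⟩, ⟨(.d0, _), _⟩, ⟨(d, _), _⟩ => nomatch d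
    | ⟨(.d1, _), _⟩, ⟨(.d0, _), _⟩, ⟨(d, _), _⟩ => nomatch d
    | ⟨(.d1, _), _⟩, ⟨(.d1, _), _⟩, ⟨(d, _), _⟩ => nomatch d
  map_comp {p q r} κ κ' := by
    obtain ⟨⟨pi, pe⟩, hp⟩ := p
    obtain ⟨⟨qi, qe⟩, hq⟩ := q
    obtain ⟨⟨ri, re⟩, hr⟩ := r
    obtain ⟨⟨d, fe⟩, pf⟩ := κ
    obtain ⟨⟨d', fe'⟩, pf'⟩ := κ'
    rcases d with ⟨⟩ <;> rcases d' with ⟨⟩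

/-- The left leg as a morphism over `B`. -/
def alphaQ : (sliceProd π).obj (OLov π g₁) ⟶ QOver π g₁ g₂ :=
  Over.homMk (alphaLeft π g₁ g₂) (by
    apply Semifunctor.hext
    · intro p
      obtain ⟨⟨pi, pe⟩, hp⟩ := p
      cases pi <;> rfl
    · intro p q κ
      obtain ⟨⟨pi, pe⟩, hp⟩ := p
      obtain ⟨⟨qi, qe⟩, hq⟩ := q
      obtain ⟨⟨d, fe⟩, pf⟩ := κ
      rcases d with ⟨⟩
      exact HEq.rfl)

/-- The right leg as a morphism over `B`. -/
def betaQ : (sliceProd π).obj (ORov π g₂) ⟶ QOver π g₁ g₂ :=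
  Over.homMk (betaLeft π g₁ g₂) (by
    apply Semifunctor.hext
    · intro p
      obtain ⟨⟨pi, pe⟩, hp⟩ := p
      cases pi <;> rfl
    · intro p q κ
      obtain ⟨⟨pi, pe⟩, hp⟩ := p
      obtain ⟨⟨qi, qe⟩, hq⟩ := q
      obtain ⟨⟨d, fe⟩, pf⟩ := κ
      rcases d with ⟨⟩
      exact HEq.rfl)

/-- The comparison `Q ⟶ E ×_B P` collapsing formal pairs by composing. -/
def thetaLeft : Semifunctor (QObj π g₁ g₂) (PbObj π (OPov π g₁ g₂)) where
  obj p := p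
  map {p q} k := match p, q, k with
    | ⟨(.t0, _), hp⟩, ⟨(.t1, _), hq⟩, ⟨.h01, c⟩ => ⟨(TriHom.h01, c.1), c.2.symm⟩
    | ⟨(.t1, _), hp⟩, ⟨(.t2, _), hq⟩, ⟨.h12, c⟩ => ⟨(TriHom.h12, c.1), c.2.symm⟩
    | ⟨(.t0, _), hp⟩, ⟨(.t2, _), hq⟩, ⟨.h02, c⟩ =>
        ⟨(TriHom.h02, Semicategory.comp c.2.1 c.2.2.1),
          (Semicategory.heq_comp hp c.2.2.2.1.symm hq
            c.2.2.2.2.1.symm c.2.2.2.2.2.symm).trans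
            (heq_of_eq (π.map_comp c.2.1 c.2.2.1).symm)⟩
    | ⟨(.t0, _), _⟩, ⟨(.t0, _), _⟩, ⟨d, _⟩ => nomatch d
    | ⟨(.t1, _), _⟩, ⟨(.t0, _), _⟩, ⟨d, _⟩ => nomatch d
    | ⟨(.t1, _), _⟩, ⟨(.t1, _), _⟩, ⟨d, _⟩ => nomatch d
    | ⟨(.t2, _), _⟩, ⟨(.t0, _), _⟩, ⟨d, _⟩ => nomatch d
    | ⟨(.t2, _), _⟩, ⟨(.t1, _), _⟩, ⟨d, _⟩ => nomatch d
    | ⟨(.t2, _), _⟩, ⟨(.t2, _), _⟩, ⟨d, _⟩ => nomatch d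
  map_comp {p q r} k l := by
    obtain ⟨⟨pi, pe⟩, hp⟩ := p
    obtain ⟨⟨qi, qe⟩, hq⟩ := q
    obtain ⟨⟨ri, re⟩, hr⟩ := r
    obtain ⟨d, c⟩ := k
    obtain ⟨d', c'⟩ := l
    cases d <;> cases d'
    exact Subtype.ext rfl

/-- The comparison as a morphism over `B`. -/
def thetaOver : QOver π g₁ g₂ ⟶ (sliceProd π).obj (OPov π g₁ g₂) :=
  Over.homMk (thetaLeft π g₁ g₂) (by
    apply Semifunctor.hext
    · intro p; rfl
    · intro p q k
      obtain ⟨⟨pi, pe⟩, hp⟩ := p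
      obtain ⟨⟨qi, qe⟩, hq⟩ := q
      obtain ⟨d, c⟩ := k
      cases d
      · exact HEq.rfl
      · exact HEq.rfl
      · exact heq_of_eq (π.map_comp c.2.1 c.2.2.1))

theorem alpha_theta : alphaQ π g₁ g₂ ≫ thetaOver π g₁ g₂ = (sliceProd π).map (iL π g₁ g₂) := by
  apply CategoryTheory.Over.OverMorphism.ext
  apply Semifunctor.hext
  · intro p
    obtain ⟨⟨pi, pe⟩, hp⟩ := p
    cases pi <;> rfl
  · intro p q κ
    obtain ⟨⟨pi, pe⟩, hp⟩ := p
    obtain ⟨⟨qi, qe⟩, hq⟩ := q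
    obtain ⟨⟨d, fe⟩, pf⟩ := κ
    rcases d with ⟨⟩
    exact HEq.rfl

theorem beta_theta : betaQ π g₁ g₂ ≫ thetaOver π g₁ g₂ = (sliceProd π).map (iR π g₁ g₂) := by
  apply CategoryTheory.Over.OverMorphism.ext
  apply Semifunctor.hext
  · intro p
    obtain ⟨⟨pi, pe⟩, hp⟩ := p
    cases pi <;> rfl
  · intro p q κ
    obtain ⟨⟨pi, pe⟩, hp⟩ := p
    obtain ⟨⟨qi, qe⟩, hq⟩ := q
    obtain ⟨⟨d, fe⟩, pf⟩ := κ
    rcases d with ⟨⟩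
    exact HEq.rfl

theorem compatQ : (sliceProd π).map (nL π g₁) ≫ alphaQ π g₁ g₂ =
    (sliceProd π).map (nR π g₂) ≫ betaQ π g₁ g₂ := by
  apply CategoryTheory.Over.OverMorphism.ext
  apply Semifunctor.hext
  · intro p
    obtain ⟨⟨pi, pe⟩, hp⟩ := p
    cases pi
    rfl
  · intro p q κ
    exact κ.val.1.elim

end ForwardQ
section ForwardGlue

variable {C : Type u} [Semicategory.{u} C]

/-- Object part of the glued semifunctor out of `Tri`. -/
def glueObj (A B : Semifunctor Duo.{u} C) : Tri.{u} → C
  | .t0 => A.obj .d0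
  | .t1 => B.obj .d0
  | .t2 => B.obj .d1

/-- Morphism part of the glued semifunctor out of `Tri`. -/
def glueMap (A B : Semifunctor Duo.{u} C) (hmid : A.obj Duo.d1 = B.obj Duo.d0) :
    {i j : Tri.{u}} → TriHom i j → (glueObj A B i ⟶ glueObj A B j)
  | _, _, .h01 => castHom rfl hmid (A.map DuoHom.h)
  | _, _, .h12 => B.map DuoHom.h
  | _, _, .h02 => Semicategory.comp (castHom rfl hmid (A.map DuoHom.h)) (B.map DuoHom.h)

/-- The glued semifunctor out of `Tri`. -/
def glueSF (A B : Semifunctor Duo.{u} C) (hmid : A.obj Duo.d1 = B.obj Duo.d0) :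
    Semifunctor Tri.{u} C where
  obj := glueObj A B
  map d := glueMap A B hmid d
  map_comp d d' := by rcases d with ⟨⟩ <;> rcases d' with ⟨⟩ <;> rfl

variable {Ee Bb : SemicatObj.{u}} (π : Ee ⟶ Bb)
variable {x y : Ee.α} {z : Bb.α} (g₁ : π.obj x ⟶ z) (g₂ : z ⟶ π.obj y)

/-- `P` is the pushout of `L ← N → R` over `B`. -/
theorem glue_exists_unique {W : Over Bb} (a : OLov π g₁ ⟶ W) (b : ORov π g₂ ⟶ W)
    (hab : nL π g₁ ≫ a = nR π g₂ ≫ b) :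
    ∃! c : OPov π g₁ g₂ ⟶ W, iL π g₁ g₂ ≫ c = a ∧ iR π g₁ g₂ ≫ c = b := by
  have hmid : a.left.obj Duo.d1 = b.left.obj Duo.d0 :=
    sf_obj_eq (congrArg CategoryTheory.CommaMorphism.left hab) Uno.u0
  refine ⟨Over.homMk (glueSF a.left b.left hmid) ?_, ⟨?_, ?_⟩, ?_⟩
  · -- over B
    apply Semifunctor.hext
    · intro i
      cases i
      · exact sf_obj_eq (Over.w a) Duo.d0
      · exact sf_obj_eq (Over.w b) Duo.d0
      · exact sf_obj_eq (Over.w b) Duo.d1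
    · intro i j d
      rcases d with ⟨⟩
      · exact (map_heq_of_heq W.hom rfl hmid.symm
          (castHom_heq rfl hmid (a.left.map DuoHom.h))).trans
          (Semifunctor.map_heq (Over.w a) DuoHom.h)
      · exact Semifunctor.map_heq (Over.w b) DuoHom.h
      · refine (heq_of_eq (W.hom.map_comp _ _)).trans ?_
        exact Semicategory.heq_comp (sf_obj_eq (Over.w a) Duo.d0)
          (sf_obj_eq (Over.w b) Duo.d0) (sf_obj_eq (Over.w b) Duo.d1)
          ((map_heq_of_heq W.hom rfl hmid.symm
            (castHom_heq rfl hmid (a.left.map DuoHom.h))).trans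
            (Semifunctor.map_heq (Over.w a) DuoHom.h))
          (Semifunctor.map_heq (Over.w b) DuoHom.h)
  · -- iL ≫ c = a
    apply CategoryTheory.Over.OverMorphism.ext
    apply Semifunctor.hext
    · intro i
      cases i
      · rfl
      · exact hmid.symm
    · intro i j d
      rcases d with ⟨⟩
      exact castHom_heq rfl hmid (a.left.map DuoHom.h)
  · -- iR ≫ c = b
    apply CategoryTheory.Over.OverMorphism.ext
    apply Semifunctor.hext
    · intro i
      cases i <;> rfl
    · intro i j d
      rcases d with ⟨⟩
      exact HEq.rfl
  · -- uniqueness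
    intro c' ⟨hcl, hcr⟩
    have hcll := congrArg CategoryTheory.CommaMorphism.left hcl
    have hcrl := congrArg CategoryTheory.CommaMorphism.left hcr
    have h01 : HEq (c'.left.map TriHom.h01)
        (castHom rfl hmid (a.left.map DuoHom.h)) :=
      (Semifunctor.map_heq hcll DuoHom.h).trans
        (castHom_heq rfl hmid (a.left.map DuoHom.h)).symm
    have h12 : HEq (c'.left.map TriHom.h12) (b.left.map DuoHom.h) :=
      Semifunctor.map_heq hcrl DuoHom.h
    apply CategoryTheory.Over.OverMorphism.ext
    apply Semifunctor.hext
    · intro i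
      cases i
      · exact sf_obj_eq hcll Duo.d0
      · exact sf_obj_eq hcrl Duo.d0
      · exact sf_obj_eq hcrl Duo.d1
    · intro i j d
      rcases d with ⟨⟩
      · exact h01
      · exact h12
      · refine (heq_of_eq (c'.left.map_comp TriHom.h01 TriHom.h12)).trans ?_
        exact Semicategory.heq_comp (sf_obj_eq hcll Duo.d0)
          (sf_obj_eq hcrl Duo.d0) (sf_obj_eq hcrl Duo.d1) h01 h12

end ForwardGlue
section ForwardMain

variable {Ee Bb : SemicatObj.{u}} (π : Ee ⟶ Bb)

theorem lifts_of_isLeftAdjoint (hA : (sliceProd π).IsLeftAdjoint)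
    {x y : Ee.α} (f : x ⟶ y) {z : Bb.α} (g₁ : π.obj x ⟶ z) (g₂ : z ⟶ π.obj y)
    (hf : π.map f = Semicategory.comp g₁ g₂) :
    ∃! p : Σ m : Ee.α, (x ⟶ m) × (m ⟶ y),
      Semicategory.comp p.2.1 p.2.2 = f ∧ π.obj p.1 = z ∧
        HEq (π.map p.2.1) g₁ ∧ HEq (π.map p.2.2) g₂ := by
  let adj := Adjunction.ofIsLeftAdjoint (sliceProd π)
  -- transpose the legs
  have hab : nL π g₁ ≫ adj.homEquiv _ _ (alphaQ π g₁ g₂) =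
      nR π g₂ ≫ adj.homEquiv _ _ (betaQ π g₁ g₂) := by
    rw [← adj.homEquiv_naturality_left, ← adj.homEquiv_naturality_left, compatQ]
  obtain ⟨c, ⟨hcL, hcR⟩, -⟩ := glue_exists_unique π g₁ g₂ _ _ hab
  set φ := (adj.homEquiv _ _).symm c with hφdef
  have hφL : (sliceProd π).map (iL π g₁ g₂) ≫ φ = alphaQ π g₁ g₂ := by
    rw [hφdef, ← adj.homEquiv_naturality_left_symm, hcL]
    exact (adj.homEquiv _ _).symm_apply_apply _
  have hφR : (sliceProd π).map (iR π g₁ g₂) ≫ φ = betaQ π g₁ g₂ := by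
    rw [hφdef, ← adj.homEquiv_naturality_left_symm, hcR]
    exact (adj.homEquiv _ _).symm_apply_apply _
  -- φ followed by θ is the identity
  have hab' : nL π g₁ ≫ adj.homEquiv _ _ ((sliceProd π).map (iL π g₁ g₂)) =
      nR π g₂ ≫ adj.homEquiv _ _ ((sliceProd π).map (iR π g₁ g₂)) := by
    rw [← adj.homEquiv_naturality_left, ← adj.homEquiv_naturality_left,
      ← Functor.map_comp, ← Functor.map_comp, nLiL_eq_nRiR]
  obtain ⟨c₀, -, hu₀⟩ := glue_exists_unique π g₁ g₂ _ _ hab'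
  have hψ : φ ≫ thetaOver π g₁ g₂ = 𝟙 _ := by
    have e1 : adj.homEquiv _ _ (φ ≫ thetaOver π g₁ g₂) = c₀ := by
      apply hu₀
      constructor
      · rw [← adj.homEquiv_naturality_left, ← CategoryTheory.Category.assoc, hφL, alpha_theta]
      · rw [← adj.homEquiv_naturality_left, ← CategoryTheory.Category.assoc, hφR, beta_theta]
    have e2 : adj.homEquiv _ _ (𝟙 ((sliceProd π).obj (OPov π g₁ g₂))) = c₀ := by
      apply hu₀
      constructor
      · rw [← adj.homEquiv_naturality_left, CategoryTheory.Category.comp_id]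
      · rw [← adj.homEquiv_naturality_left, CategoryTheory.Category.comp_id]
    exact (adj.homEquiv _ _).injective (e1.trans e2.symm)
  -- extract the components of φ
  have hL := congrArg CategoryTheory.CommaMorphism.left hφL
  have hR := congrArg CategoryTheory.CommaMorphism.left hφR
  have hT := congrArg CategoryTheory.CommaMorphism.left hψ
  have hφobj : ∀ p : PbObj π (OPov π g₁ g₂), φ.left.obj p = p := by
    intro p
    obtain ⟨⟨pi, pe⟩, hp⟩ := p
    cases pi
    · exact sf_obj_eq hL ⟨(Duo.d0, pe), hp⟩
    · exact sf_obj_eq hL ⟨(Duo.d1, pe), hp⟩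
    · exact sf_obj_eq hR ⟨(Duo.d1, pe), hp⟩
  -- the distinguished arrow over the composite
  set P0 : PbObj π (OPov π g₁ g₂) := ⟨(Tri.t0, x), rfl⟩ with hP0def
  set P2 : PbObj π (OPov π g₁ g₂) := ⟨(Tri.t2, y), rfl⟩ with hP2def
  set κ : P0 ⟶ P2 := ⟨(TriHom.h02, f), heq_of_eq hf.symm⟩ with hκdef
  set P0q : QObj π g₁ g₂ := ⟨(Tri.t0, x), rfl⟩ with hP0qdef
  set P2q : QObj π g₁ g₂ := ⟨(Tri.t2, y), rfl⟩ with hP2qdef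
  -- the key computation: for any lift of the factorization, φ sends κ to the
  -- corresponding formal pair in Q
  have key : ∀ (m : Ee.α) (f₁ : x ⟶ m) (f₂ : m ⟶ y),
      Semicategory.comp f₁ f₂ = f → ∀ (hm : π.obj m = z) (h1 : HEq (π.map f₁) g₁)
      (h2 : HEq (π.map f₂) g₂),
      HEq (φ.left.map κ)
        ((⟨TriHom.h02, ⟨m, f₁, f₂, hm, h1, h2⟩⟩ : QHom π g₁ g₂ P0q P2q)) := by
    intro m f₁ f₂ hcomp hm h1 h2
    let M : PbObj π (OPov π g₁ g₂) := ⟨(Tri.t1, m), hm.symm⟩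
    let κ1 : P0 ⟶ M := ⟨(TriHom.h01, f₁), h1.symm⟩
    let κ2 : M ⟶ P2 := ⟨(TriHom.h12, f₂), h2.symm⟩
    have hκc : κ = Semicategory.comp κ1 κ2 := by
      apply Subtype.ext
      show (TriHom.h02, f) = (tricomp TriHom.h01 TriHom.h12, Semicategory.comp f₁ f₂)
      rw [hcomp]
      rfl
    have e2 : φ.left.map κ = Semicategory.comp (φ.left.map κ1) (φ.left.map κ2) := by
      rw [hκc]
      exact φ.left.map_comp κ1 κ2
    let L0 : PbObj π (OLov π g₁) := ⟨(Duo.d0, x), rfl⟩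
    let L1 : PbObj π (OLov π g₁) := ⟨(Duo.d1, m), hm.symm⟩
    let R0 : PbObj π (ORov π g₂) := ⟨(Duo.d0, m), hm.symm⟩
    let R1 : PbObj π (ORov π g₂) := ⟨(Duo.d1, y), rfl⟩
    let κ1' : L0 ⟶ L1 := ⟨(DuoHom.h, f₁), h1.symm⟩
    let κ2' : R0 ⟶ R1 := ⟨(DuoHom.h, f₂), h2.symm⟩
    have h56 := Semifunctor.map_heq hL κ1'
    have h57 := Semifunctor.map_heq hR κ2'
    have e3 : HEq (Semicategory.comp (φ.left.map κ1) (φ.left.map κ2))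
        ((⟨TriHom.h02, ⟨m, f₁, f₂, hm, h1, h2⟩⟩ : QHom π g₁ g₂ P0q P2q)) :=
      Semicategory.heq_comp (hφobj P0) (hφobj M) (hφobj P2) h56 h57
    exact (heq_of_eq e2).trans e3
  -- existence: decompose φ.map κ
  set w' := castHom (hφobj P0) (hφobj P2) (φ.left.map κ) with hw'def
  have e6 : (thetaLeft π g₁ g₂).map w' = κ := by
    refine eq_of_heq (HEq.trans ?_ (Semifunctor.map_heq hT κ))
    exact map_heq_of_heq (thetaLeft π g₁ g₂) (hφobj P0).symm (hφobj P2).symm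
      (castHom_heq (hφobj P0) (hφobj P2) (φ.left.map κ))
  have e7 : HEq (φ.left.map κ) w' := (castHom_heq (hφobj P0) (hφobj P2) (φ.left.map κ)).symm
  clear_value w'
  clear hw'def
  obtain ⟨d, data⟩ := w'
  cases d
  obtain ⟨m, f₁, f₂, hmz, hh1, hh2⟩ := data
  -- composing the formal pair recovers f
  have hcomp : Semicategory.comp f₁ f₂ = f := by
    have := congrArg Subtype.val e6
    exact congrArg Prod.snd this
  refine ⟨⟨m, f₁, f₂⟩, ⟨hcomp, hmz, hh1, hh2⟩, ?_⟩
  rintro ⟨mq, fq1, fq2⟩ ⟨hqc, hqm, hq1, hq2⟩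
  have k1 := key m f₁ f₂ hcomp hmz hh1 hh2
  have k2 := key mq fq1 fq2 hqc hqm hq1 hq2
  have hk1 : HEq (φ.left.map κ) (⟨TriHom.h02, ⟨m, f₁, f₂, hmz, hh1, hh2⟩⟩ :
    QHom π g₁ g₂ P0q P2q) := k1
  have e8 : (⟨TriHom.h02, ⟨mq, fq1, fq2, hqm, hq1, hq2⟩⟩ : QHom π g₁ g₂ P0q P2q) =
      ⟨TriHom.h02, ⟨m, f₁, f₂, hmz, hh1, hh2⟩⟩ :=
    eq_of_heq (k2.symm.trans hk1)
  injection e8 with i1 i2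
  have e9 : (⟨mq, fq1, fq2, hqm, hq1, hq2⟩ :
      Σ' (m : Ee.α) (k₁ : x ⟶ m) (k₂ : m ⟶ y),
        π.obj m = z ∧ HEq (π.map k₁) g₁ ∧ HEq (π.map k₂) g₂) =
      ⟨m, f₁, f₂, hmz, hh1, hh2⟩ := i2
  injection e9 with j1 j2
  subst j1
  injection eq_of_heq j2 with j3 j4
  subst j3
  injection eq_of_heq j4 with j5 j6
  subst j5
  rfl

end ForwardMain

/-- Proposition 3.9, (1)⟺(4): `π : E → B` is exponentiable in `Semicat/B` iff binary
factorizations lift uniquely along `π`. -/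
theorem semifunctor_exponentiable_iff_unique_binary_lifts
    {Ee Bb : SemicatObj.{u}} (π : Ee ⟶ Bb) :
    (sliceProd π).IsLeftAdjoint ↔
      ∀ {x y : Ee.α} (f : x ⟶ y) {z : Bb.α} (g₁ : π.obj x ⟶ z) (g₂ : z ⟶ π.obj y),
        π.map f = Semicategory.comp g₁ g₂ →
        ∃! p : Σ m : Ee.α, (x ⟶ m) × (m ⟶ y),
          Semicategory.comp p.2.1 p.2.2 = f ∧ π.obj p.1 = z ∧
            HEq (π.map p.2.1) g₁ ∧ HEq (π.map p.2.2) g₂ := by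
  constructor
  · intro hA x y f z g₁ g₂ hf
    exact lifts_of_isLeftAdjoint π hA f g₁ g₂ hf
  · intro H
    exact isLeftAdjoint_of_lifts π H
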